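/- If M is a uniquely restricted matching in a graph G and e is an edge of the subgraph H induced by the M-saturated vertices that is a matched bridge and a pendant edge of H, then removing both endpoints of e from H leaves a graph whose restriction of M (minus e) is still a uniquely restricted matching, and the pendant endpoint of e is non-adjacent to all remaining vertices of H. -/

import Mathlib

/-!
A perfect matching of the graph induced by a vertex set `S` is the same thing as a matching of
`G` whose saturated vertex set is `S`, so `M` is uniquely restricted iff it is the only matching
of `G` saturating exactly `mVerts M`. Uniqueness passes to every `M' ⊆ M`: a rival `N` for `M'`
together with `M \ M'` would be a rival for `M`. For the pendant endpoint `x`, its only neighbour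
in the induced graph is `y`, which is no longer saturated once `s(x, y)` is removed.
-/

/-- `M` is a matching in `G`: a set of edges of `G` that are pairwise vertex-disjoint. -/
def IsMatching {V : Type*} (G : SimpleGraph V) (M : Set (Sym2 V)) : Prop :=
  M ⊆ G.edgeSet ∧ M.Pairwise fun e f => ∀ v, v ∈ e → v ∉ f

/-- The set of `M`-saturated vertices (endpoints of edges of `M`). -/
def mVerts {V : Type*} (M : Set (Sym2 V)) : Set V := {v | ∃ e ∈ M, v ∈ e}

/-- `M` is a perfect matching of `G`: a matching saturating every vertex. -/
def IsPerfectM {V : Type*} (G : SimpleGraph V) (M : Set (Sym2 V)) : Prop :=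
  IsMatching G M ∧ ∀ v, v ∈ mVerts M

/-- `M` is an acyclic matching: the subgraph induced by the endpoints is a forest. -/
def IsAcyclicMatching {V : Type*} (G : SimpleGraph V) (M : Set (Sym2 V)) : Prop :=
  IsMatching G M ∧ (G.induce (mVerts M)).IsAcyclic

/-- `M` is an induced matching: the subgraph induced by the endpoints is exactly `M`. -/
def IsInducedMatching {V : Type*} (G : SimpleGraph V) (M : Set (Sym2 V)) : Prop :=
  IsMatching G M ∧ ∀ e ∈ G.edgeSet, (∀ v, v ∈ e → v ∈ mVerts M) → e ∈ M

/-- `M` is a uniquely restricted matching: the subgraph induced by the endpoints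
has exactly one perfect matching. -/
def IsURMatching {V : Type*} (G : SimpleGraph V) (M : Set (Sym2 V)) : Prop :=
  IsMatching G M ∧
    ∃! N : Set (Sym2 (mVerts M)), IsPerfectM (G.induce (mVerts M)) N

/-- `S` is an independent set in `G`. -/
def IsIndep {V : Type*} (G : SimpleGraph V) (S : Set V) : Prop :=
  S.Pairwise fun u v => ¬ G.Adj u v

section

variable {V : Type*} {G : SimpleGraph V}

lemma mVerts_mono {M M' : Set (Sym2 V)} (h : M' ⊆ M) : mVerts M' ⊆ mVerts M :=
  fun _ ⟨e, he, hv⟩ => ⟨e, h he, hv⟩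

lemma mVerts_union (M M' : Set (Sym2 V)) : mVerts (M ∪ M') = mVerts M ∪ mVerts M' := by
  ext v
  simp only [mVerts, Set.mem_union, Set.mem_ofPred_eq, or_and_right, exists_or]

lemma IsMatching.mono {M M' : Set (Sym2 V)} (hM : IsMatching G M) (h : M' ⊆ M) :
    IsMatching G M' :=
  ⟨h.trans hM.1, hM.2.mono h⟩

lemma IsMatching.notMem_mVerts_diff_singleton {M : Set (Sym2 V)} (hM : IsMatching G M)
    {e : Sym2 V} (he : e ∈ M) {v : V} (hv : v ∈ e) : v ∉ mVerts (M \ {e}) :=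
  fun ⟨_, ⟨hf, hfe⟩, hvf⟩ => hM.2 hf he hfe v hvf hv

section Induce

variable {S : Set V}

lemma map_val_mem_edgeSet_iff {f : Sym2 S} :
    Sym2.map (↑) f ∈ G.edgeSet ↔ f ∈ (G.induce S).edgeSet := by
  induction f using Sym2.ind with
  | _ a b => simp

lemma isMatching_induce_iff {N : Set (Sym2 S)} :
    IsMatching (G.induce S) N ↔ IsMatching G (Sym2.map (↑) '' N) := by
  have hinj : Set.InjOn (Sym2.map ((↑) : S → V)) N :=
    (Sym2.map.injective Subtype.val_injective).injOn
  have hdisj : ∀ e f : Sym2 S,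
      (∀ v, v ∈ Sym2.map ((↑) : S → V) e → v ∉ Sym2.map ((↑) : S → V) f) ↔
        ∀ v, v ∈ e → v ∉ f := by
    intro e f
    simp only [Sym2.mem_map]
    constructor
    · rintro h v hve hvf
      exact h v ⟨v, hve, rfl⟩ ⟨v, hvf, rfl⟩
    · rintro h _ ⟨a, hae, rfl⟩ ⟨b, hbf, hba⟩
      exact h a hae (Subtype.val_injective hba ▸ hbf)
  unfold IsMatching
  rw [Set.image_subset_iff, hinj.pairwise_image]
  have hE : (G.induce S).edgeSet = Sym2.map (↑) ⁻¹' G.edgeSet :=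
    Set.ext fun _ => map_val_mem_edgeSet_iff.symm
  simp only [hE, Set.Pairwise, Function.onFun, hdisj]

lemma mVerts_image_map_val (N : Set (Sym2 S)) :
    mVerts (Sym2.map ((↑) : S → V) '' N) = ((↑) : S → V) '' mVerts N := by
  ext v
  simp only [mVerts, Set.mem_image, Set.mem_ofPred_eq]
  aesop

lemma isPerfectM_induce_iff {N : Set (Sym2 S)} :
    IsPerfectM (G.induce S) N ↔
      IsMatching G (Sym2.map (↑) '' N) ∧ mVerts (Sym2.map (↑) '' N) = S := by
  rw [IsPerfectM, isMatching_induce_iff, mVerts_image_map_val, ← Set.eq_univ_iff_forall,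
    ← (Set.image_injective.mpr Subtype.val_injective).eq_iff, Set.image_univ,
    Subtype.range_coe]

lemma image_map_val_preimage {M : Set (Sym2 V)} (h : mVerts M ⊆ S) :
    Sym2.map (↑) '' (Sym2.map ((↑) : S → V) ⁻¹' M) = M := by
  refine Set.image_preimage_eq_of_subset fun e he => ?_
  induction e using Sym2.ind with
  | _ a b =>
    have ha : a ∈ S := h ⟨_, he, Sym2.mem_mk_left a b⟩
    have hb : b ∈ S := h ⟨_, he, Sym2.mem_mk_right a b⟩
    exact ⟨s(⟨a, ha⟩, ⟨b, hb⟩), rfl⟩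

end Induce

lemma isURMatching_iff {M : Set (Sym2 V)} :
    IsURMatching G M ↔
      IsMatching G M ∧ ∀ N, IsMatching G N → mVerts N = mVerts M → N = M := by
  have hpull : ∀ N : Set (Sym2 V), IsMatching G N → mVerts N = mVerts M →
      IsPerfectM (G.induce (mVerts M)) (Sym2.map (↑) ⁻¹' N) := fun N hN hNM => by
    rw [isPerfectM_induce_iff, image_map_val_preimage hNM.le]
    exact ⟨hN, hNM⟩
  constructor
  · rintro ⟨hM, Q, -, hQ⟩
    refine ⟨hM, fun N hN hNM => ?_⟩
    calc N = Sym2.map (↑) '' (Sym2.map ((↑) : mVerts M → V) ⁻¹' N) :=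
          (image_map_val_preimage hNM.le).symm
      _ = Sym2.map (↑) '' (Sym2.map ((↑) : mVerts M → V) ⁻¹' M) := by
          rw [hQ _ (hpull N hN hNM), hQ _ (hpull M hM rfl)]
      _ = M := image_map_val_preimage le_rfl
  · rintro ⟨hM, huniq⟩
    refine ⟨hM, _, hpull M hM rfl, fun N hN => ?_⟩
    obtain ⟨hNm, hNv⟩ := isPerfectM_induce_iff.mp hN
    have hinj := Sym2.map.injective (Subtype.val_injective (p := (· ∈ mVerts M)))
    exact (Set.preimage_image_eq N hinj).symm.trans (congrArg _ (huniq _ hNm hNv))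

lemma IsURMatching.subset {M M' : Set (Sym2 V)} (hM : IsURMatching G M) (h : M' ⊆ M) :
    IsURMatching G M' := by
  rw [isURMatching_iff] at hM ⊢
  obtain ⟨hM, huniq⟩ := hM
  refine ⟨hM.mono h, fun N hN hNM' => ?_⟩
  have hout : ∀ f ∈ M \ M', ∀ v ∈ f, v ∉ mVerts M' := fun f hf v hvf ⟨g, hg, hvg⟩ =>
    hM.2 hf.1 (h hg) (fun hfg => hf.2 (hfg ▸ hg)) v hvf hvg
  have hunion : IsMatching G (N ∪ (M \ M')) := by
    refine ⟨Set.union_subset hN.1 (Set.sdiff_subset.trans hM.1), ?_⟩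
    refine Set.pairwise_union.mpr ⟨hN.2, hM.2.mono Set.sdiff_subset,
      fun e he f hf _ => ⟨fun v hve hvf => ?_, fun v hvf hve => ?_⟩⟩ <;>
    exact hout f hf v hvf (hNM' ▸ ⟨e, he, hve⟩)
  have hverts : mVerts (N ∪ (M \ M')) = mVerts M := by
    rw [mVerts_union, hNM', ← mVerts_union, Set.union_sdiff_cancel h]
  have hNM := huniq _ hunion hverts
  ext f
  constructor
  · intro hf
    by_contra hfM'
    obtain ⟨v, hv⟩ : ∃ v, v ∈ f := ⟨f.out.1, Sym2.out_fst_mem f⟩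
    exact hout f ⟨hNM ▸ Or.inl hf, hfM'⟩ v hv (hNM' ▸ ⟨f, hf, hv⟩)
  · intro hf
    obtain hfN | hfd : f ∈ N ∪ (M \ M') := hNM.symm ▸ h hf
    · exact hfN
    · exact absurd hf hfd.2

end

theorem stmt18_general {V : Type*} (G : SimpleGraph V) (M : Set (Sym2 V))
    (hM : IsURMatching G M) (x y : V) (he : s(x, y) ∈ M)
    (hx : x ∈ mVerts M) (hy : y ∈ mVerts M)
    (hpendant : (G.induce (mVerts M)).neighborSet ⟨x, hx⟩ = {⟨y, hy⟩}) :
    IsURMatching G (M \ {s(x, y)}) ∧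
    ∀ v ∈ mVerts (M \ {s(x, y)}), ¬ G.Adj x v := by
  refine ⟨hM.subset Set.sdiff_subset, fun v hv hxv => ?_⟩
  have hvy : (⟨v, mVerts_mono Set.sdiff_subset hv⟩ : mVerts M) = ⟨y, hy⟩ := by
    rw [← Set.mem_singleton_iff, ← hpendant]
    exact hxv
  obtain rfl : v = y := congrArg Subtype.val hvy
  exact hM.1.notMem_mVerts_diff_singleton he (Sym2.mem_mk_right x v) hv

theorem stmt18 {V : Type*} (G : SimpleGraph V) (M : Set (Sym2 V))
    (hM : IsURMatching G M) (x y : V) (he : s(x, y) ∈ M)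
    (hx : x ∈ mVerts M) (hy : y ∈ mVerts M)
    (hbridge : (G.induce (mVerts M)).IsBridge s(⟨x, hx⟩, ⟨y, hy⟩))
    (hpendant : (G.induce (mVerts M)).neighborSet ⟨x, hx⟩ = {⟨y, hy⟩}) :
    IsURMatching G (M \ {s(x, y)}) ∧
    ∀ v ∈ mVerts (M \ {s(x, y)}), ¬ G.Adj x v :=
  stmt18_general G M hM x y he hx hy hpendant
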